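/- arXiv:1207.0624 — 2 statements merged into one kernel-verified Lean document; each statement's English description precedes it below -/
import Mathlib

section
/- Let Γ be a group generated by a conjugation-invariant subset S (with S = S⁻¹), and let ‖·‖_S denote the associated word norm. If ψ : Γ → ℝ is a homogeneous quasi-morphism with defect D_ψ that vanishes on S, then |ψ(f)| ≤ D_ψ·‖f‖_S for all f ∈ Γ. In particular, if ψ(f) ≠ 0 for some f, then the word norm ‖·‖_S is unbounded on Γ, since ‖f^n‖_S ≥ n·|ψ(f)|/D_ψ. -/
def IsHomogeneousQM {Γ : Type*} [Group Γ] (ψ : Γ → ℝ) : Prop :=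
  ∀ (g : Γ) (n : ℤ), ψ (g ^ n) = n * ψ g

/-- The word norm associated to a generating set `S`. -/
noncomputable def wordNorm {Γ : Type*} [Group Γ] (S : Set Γ) (f : Γ) : ℕ :=
  sInf {m | ∃ l : List Γ, l.length = m ∧ (∀ x ∈ l, x ∈ S) ∧ l.prod = f}

/-! Along a word `s₁ ⋯ s_m` in `S` the quasi-morphism `ψ` vanishes on every letter, so each
multiplication changes `|ψ|` by at most the defect `D`; taking a shortest word gives
`|ψ f| ≤ D ‖f‖_S`. Homogeneity turns this into `n |ψ f| = |ψ (f ^ n)| ≤ D ‖f ^ n‖_S`. -/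

namespace IsHomogeneousQM

variable {Γ : Type*} [Group Γ] {ψ : Γ → ℝ}

theorem map_one (hψ : IsHomogeneousQM ψ) : ψ 1 = 0 := by
  simpa using hψ 1 0

theorem abs_map_pow (hψ : IsHomogeneousQM ψ) (g : Γ) (n : ℕ) :
    |ψ (g ^ n)| = n * |ψ g| := by
  rw [← zpow_natCast, hψ g n, abs_mul, Int.cast_natCast, Nat.abs_cast]

end IsHomogeneousQM

section WordNorm

variable {Γ : Type*} [Group Γ] {S : Set Γ}

theorem exists_list_length_eq_wordNorm {f : Γ}
    (hf : ∃ l : List Γ, (∀ x ∈ l, x ∈ S) ∧ l.prod = f) :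
    ∃ l : List Γ, l.length = wordNorm S f ∧ (∀ x ∈ l, x ∈ S) ∧ l.prod = f := by
  obtain ⟨l, hlS, hlf⟩ := hf
  exact Nat.sInf_mem (s := {m | ∃ l : List Γ, l.length = m ∧ (∀ x ∈ l, x ∈ S) ∧ l.prod = f})
    ⟨l.length, l, rfl, hlS, hlf⟩

variable {ψ : Γ → ℝ} {D : ℝ}

theorem abs_map_list_prod_le (hdef : ∀ g h : Γ, |ψ (g * h) - ψ g - ψ h| ≤ D)
    (h1 : ψ 1 = 0) (hvan : ∀ s ∈ S, ψ s = 0) :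
    ∀ l : List Γ, (∀ x ∈ l, x ∈ S) → |ψ l.prod| ≤ D * l.length
  | [], _ => by simp [h1]
  | s :: l, hl => by
    have hs : ψ s = 0 := hvan s (hl s List.mem_cons_self)
    have ih := abs_map_list_prod_le hdef h1 hvan l fun x hx => hl x (List.mem_cons_of_mem s hx)
    have hstep : |ψ (s * l.prod) - ψ l.prod| ≤ D := by simpa [hs] using hdef s l.prod
    rw [List.prod_cons, List.length_cons, Nat.cast_succ]
    linarith [abs_sub_abs_le_abs_sub (ψ (s * l.prod)) (ψ l.prod)]

theorem abs_le_mul_wordNorm (hdef : ∀ g h : Γ, |ψ (g * h) - ψ g - ψ h| ≤ D)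
    (h1 : ψ 1 = 0) (hvan : ∀ s ∈ S, ψ s = 0) {f : Γ}
    (hf : ∃ l : List Γ, (∀ x ∈ l, x ∈ S) ∧ l.prod = f) :
    |ψ f| ≤ D * wordNorm S f := by
  obtain ⟨l, hlen, hlS, rfl⟩ := exists_list_length_eq_wordNorm hf
  rw [← hlen]
  exact abs_map_list_prod_le hdef h1 hvan l hlS

end WordNorm

theorem qm_vanishing_bounds_word_norm_general {Γ : Type*} [Group Γ] (S : Set Γ)
    (hgen : ∀ f : Γ, ∃ l : List Γ, (∀ x ∈ l, x ∈ S) ∧ l.prod = f)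
    (ψ : Γ → ℝ) (D : ℝ)
    (hdef : ∀ g h : Γ, |ψ (g * h) - ψ g - ψ h| ≤ D)
    (hhom : IsHomogeneousQM ψ)
    (hvan : ∀ s ∈ S, ψ s = 0) :
    (∀ f : Γ, |ψ f| ≤ D * wordNorm S f) ∧
      ∀ (f : Γ) (n : ℕ), (n : ℝ) * |ψ f| / D ≤ wordNorm S (f ^ n) := by
  have hbound (f : Γ) : |ψ f| ≤ D * wordNorm S f :=
    abs_le_mul_wordNorm hdef hhom.map_one hvan (hgen f)
  have hD : 0 ≤ D := (abs_nonneg _).trans (hdef 1 1)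
  refine ⟨hbound, fun f n => div_le_of_le_mul₀ hD (Nat.cast_nonneg _) ?_⟩
  rw [← hhom.abs_map_pow, mul_comm]
  exact hbound (f ^ n)

/-- A homogeneous quasi-morphism of defect `D` vanishing on a conjugation-invariant
symmetric generating set `S` satisfies `|ψ f| ≤ D * ‖f‖_S`, and
`‖f^n‖_S ≥ n |ψ f| / D`. -/
theorem qm_vanishing_bounds_word_norm {Γ : Type*} [Group Γ] (S : Set Γ)
    (hsymm : ∀ s ∈ S, s⁻¹ ∈ S)
    (hconj : ∀ s ∈ S, ∀ g : Γ, g * s * g⁻¹ ∈ S)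
    (hgen : ∀ f : Γ, ∃ l : List Γ, (∀ x ∈ l, x ∈ S) ∧ l.prod = f)
    (ψ : Γ → ℝ) (D : ℝ) (hD : 0 < D)
    (hdef : ∀ g h : Γ, |ψ (g * h) - ψ g - ψ h| ≤ D)
    (hhom : IsHomogeneousQM ψ)
    (hvan : ∀ s ∈ S, ψ s = 0) :
    (∀ f : Γ, |ψ f| ≤ D * wordNorm S f) ∧
      ∀ (f : Γ) (n : ℕ), (n : ℝ) * |ψ f| / D ≤ wordNorm S (f ^ n) :=
  qm_vanishing_bounds_word_norm_general S hgen ψ D hdef hhom hvan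
end

section
/- Let Γ be a group, d a right-invariant metric on Γ, and ψ : Γ → ℝ a homogeneous quasi-morphism with defect D_ψ such that |ψ(g)| ≤ C·d(1,g) for all g ∈ Γ, where C > 0. If f, h ∈ Γ and p ∈ ℕ satisfy d(f^p, h^p) < 1, then |ψ(f) − ψ(h)| ≤ (D_ψ + C)/p. -/
section RightInvariant

variable {Γ : Type*} [Group Γ] [PseudoMetricSpace Γ]

lemma dist_one_mul_inv_of_right_invariant
    (hinv : ∀ g h k : Γ, dist (g * k) (h * k) = dist g h) (a b : Γ) :
    dist 1 (a * b⁻¹) = dist a b := by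
  simpa [dist_comm] using (hinv 1 (a * b⁻¹) b).symm

end RightInvariant

section Quasimorphism

variable {Γ : Type*} [Group Γ] {ψ : Γ → ℝ} {D : ℝ}

lemma IsHomogeneousQM.map_pow (hhom : IsHomogeneousQM ψ) (g : Γ) (n : ℕ) :
    ψ (g ^ n) = n * ψ g := by
  simpa using hhom g n

lemma abs_sub_le_defect_add_abs_mul_inv (hdef : ∀ g h : Γ, |ψ (g * h) - ψ g - ψ h| ≤ D)
    (a b : Γ) : |ψ a - ψ b| ≤ D + |ψ (a * b⁻¹)| := by
  have hab := hdef (a * b⁻¹) b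
  rw [inv_mul_cancel_right] at hab
  calc |ψ a - ψ b| = |(ψ a - ψ (a * b⁻¹) - ψ b) + ψ (a * b⁻¹)| := by ring_nf
    _ ≤ |ψ a - ψ (a * b⁻¹) - ψ b| + |ψ (a * b⁻¹)| := abs_add_le _ _
    _ ≤ D + |ψ (a * b⁻¹)| := by gcongr

lemma abs_sub_le_defect_add_mul_dist [PseudoMetricSpace Γ]
    (hinv : ∀ g h k : Γ, dist (g * k) (h * k) = dist g h)
    (hdef : ∀ g h : Γ, |ψ (g * h) - ψ g - ψ h| ≤ D)
    {C : ℝ} (hdom : ∀ g : Γ, |ψ g| ≤ C * dist 1 g) (a b : Γ) :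
    |ψ a - ψ b| ≤ D + C * dist a b := by
  calc |ψ a - ψ b| ≤ D + |ψ (a * b⁻¹)| := abs_sub_le_defect_add_abs_mul_inv hdef a b
    _ ≤ D + C * dist a b := by
      rw [← dist_one_mul_inv_of_right_invariant hinv a b]
      gcongr
      exact hdom _

end Quasimorphism

theorem qm_close_on_close_powers_general {Γ : Type*} [Group Γ] [PseudoMetricSpace Γ]
    (hinv : ∀ g h k : Γ, dist (g * k) (h * k) = dist g h)
    (ψ : Γ → ℝ) (D : ℝ)
    (hdef : ∀ g h : Γ, |ψ (g * h) - ψ g - ψ h| ≤ D)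
    (hhom : IsHomogeneousQM ψ)
    (C : ℝ) (hC : 0 < C) (hdom : ∀ g : Γ, |ψ g| ≤ C * dist 1 g)
    (f h : Γ) (p : ℕ) (hp : 0 < p) (hclose : dist (f ^ p) (h ^ p) < 1) :
    |ψ f - ψ h| ≤ (D + C) / p := by
  have hp' : (0 : ℝ) < p := by exact_mod_cast hp
  have hpowers : |ψ (f ^ p) - ψ (h ^ p)| ≤ D + C :=
    calc |ψ (f ^ p) - ψ (h ^ p)| ≤ D + C * dist (f ^ p) (h ^ p) :=
          abs_sub_le_defect_add_mul_dist hinv hdef hdom _ _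
      _ ≤ D + C := by gcongr; exact mul_le_of_le_one_right hC.le hclose.le
  rw [hhom.map_pow, hhom.map_pow, ← mul_sub, abs_mul, abs_of_pos hp'] at hpowers
  rw [le_div_iff₀ hp']
  linarith

/-- If a homogeneous quasi-morphism is dominated by a right-invariant metric and
`d(f^p, h^p) < 1`, then `|ψ f - ψ h| ≤ (D + C)/p`. -/
theorem qm_close_on_close_powers {Γ : Type*} [Group Γ] [PseudoMetricSpace Γ]
    (hinv : ∀ g h k : Γ, dist (g * k) (h * k) = dist g h)
    (ψ : Γ → ℝ) (D : ℝ) (hD : 0 ≤ D)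
    (hdef : ∀ g h : Γ, |ψ (g * h) - ψ g - ψ h| ≤ D)
    (hhom : IsHomogeneousQM ψ)
    (C : ℝ) (hC : 0 < C) (hdom : ∀ g : Γ, |ψ g| ≤ C * dist 1 g)
    (f h : Γ) (p : ℕ) (hp : 0 < p) (hclose : dist (f ^ p) (h ^ p) < 1) :
    |ψ f - ψ h| ≤ (D + C) / p :=
  qm_close_on_close_powers_general hinv ψ D hdef hhom C hC hdom f h p hp hclose
end
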